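/- There exists an InqLTL(~) formula over AP = {ν, #} whose unique model is the team of all ν-traces: there is an InqLTL(~) formula φ such that for every team L over AP = {ν, #}, L ⊨ φ if and only if L equals the set of all traces w such that ν ∈ w(i) for every i ∈ ℕ and there is exactly one i ∈ ℕ with # ∈ w(i). -/

import Mathlib

/-- A trace over the set `AP` of atomic propositions. -/
abbrev Trace (AP : Type) := ℕ → Set AP

/-- A team: a set of traces. -/
abbrev Team (AP : Type) := Set (Trace AP)

/-- The suffix `w≥i` of a trace. -/
def Trace.shift {AP : Type} (w : Trace AP) (i : ℕ) : Trace AP := fun j => w (i + j)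

/-- The suffix team `L≥i`. -/
def Team.shift {AP : Type} (L : Team AP) (i : ℕ) : Team AP := (fun w => Trace.shift w i) '' L

/-- InqLTL(~) formulas over `AP`: InqLTL extended with Boolean negation `~`. -/
inductive InqFormN (AP : Type) : Type where
  | bot
  | atom (p : AP)
  | or (φ ψ : InqFormN AP)
  | and (φ ψ : InqFormN AP)
  | imp (φ ψ : InqFormN AP)
  | bneg (φ : InqFormN AP)
  | next (φ : InqFormN AP)
  | untl (φ ψ : InqFormN AP)
  | rel (φ ψ : InqFormN AP)

/-- Team satisfaction for InqLTL(~). -/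
def InqFormN.sat {AP : Type} : InqFormN AP → Team AP → Prop
  | .bot, L => L = ∅
  | .atom p, L => ∀ w ∈ L, p ∈ w 0
  | .or φ ψ, L => φ.sat L ∨ ψ.sat L
  | .and φ ψ, L => φ.sat L ∧ ψ.sat L
  | .imp φ ψ, L => ∀ L' ⊆ L, φ.sat L' → ψ.sat L'
  | .bneg φ, L => ¬ φ.sat L
  | .next φ, L => φ.sat (L.shift 1)
  | .untl φ ψ, L => ∃ i, ψ.sat (L.shift i) ∧ ∀ k < i, φ.sat (L.shift k)
  | .rel φ ψ, L => ∀ i, ψ.sat (L.shift i) ∨ ∃ k < i, φ.sat (L.shift k)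

/-- The set `AP = {ν, #}` of atomic propositions. -/
inductive AP2 : Type where
  | nu
  | hash
deriving DecidableEq

instance : Fintype AP2 := ⟨{AP2.nu, AP2.hash}, fun x => by cases x <;> simp⟩

/-- A ν-trace: ν holds at every position and # holds at exactly one position. -/
def IsNuTrace (w : Trace AP2) : Prop :=
  (∀ i, AP2.nu ∈ w i) ∧ ∃! i, AP2.hash ∈ w i

/-
Over the truth-conditional (flat) fragment, a formula holds in a team iff every trace of the
team satisfies a fixed trace property. The conjunction of `G ν`, `G (# → X G ¬#)` and
`¬ G ¬#` (with `¬` the intuitionistic negation `→ ⊥`) is flat and expresses "being a ν-trace",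
so its models are exactly the subteams of the team of all ν-traces. Boolean negation adds the
non-flat conjunct `G ~¬#`: at every position some trace of the team carries `#`. Since a
ν-trace is determined by the position of its `#`, the only such subteam is the whole team.
-/

namespace InqFormN

variable {AP : Type} {φ ψ : InqFormN AP} {P Q : Trace AP → Prop}

def neg (φ : InqFormN AP) : InqFormN AP := .imp φ .bot

def globally (φ : InqFormN AP) : InqFormN AP := .rel .bot φ

/-- `φ` is flat, with `P` as its truth condition on single traces. -/
def FlatWith (φ : InqFormN AP) (P : Trace AP → Prop) : Prop :=
  ∀ L : Team AP, φ.sat L ↔ ∀ w ∈ L, P w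

theorem FlatWith.of_iff (hφ : φ.FlatWith P) (hPQ : ∀ w, P w ↔ Q w) : φ.FlatWith Q := fun L => by
  simp only [hφ L, hPQ]

theorem flatWith_bot : (bot : InqFormN AP).FlatWith fun _ => False := fun L => by
  simp [sat, Set.eq_empty_iff_forall_notMem]

theorem flatWith_atom (p : AP) : (atom p).FlatWith fun w => p ∈ w 0 := fun _ => Iff.rfl

theorem FlatWith.and (hφ : φ.FlatWith P) (hψ : ψ.FlatWith Q) :
    (φ.and ψ).FlatWith fun w => P w ∧ Q w := fun L => by
  simp only [sat, hφ L, hψ L, ← forall_and]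

theorem FlatWith.imp (hφ : φ.FlatWith P) (hψ : ψ.FlatWith Q) :
    (φ.imp ψ).FlatWith fun w => P w → Q w := by
  unfold FlatWith at *
  intro L
  simp only [sat, hφ, hψ]
  refine ⟨fun h w hw hP => ?_, fun h L' hL' hP w hw => h w (hL' hw) (hP w hw)⟩
  exact h {w} (Set.singleton_subset_iff.mpr hw) (by simpa using hP) w rfl

theorem FlatWith.neg (hφ : φ.FlatWith P) : φ.neg.FlatWith fun w => ¬ P w :=
  hφ.imp flatWith_bot

theorem FlatWith.next (hφ : φ.FlatWith P) :
    φ.next.FlatWith fun w => P (w.shift 1) := fun L => by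
  simp only [sat, hφ _, Team.shift, Set.forall_mem_image]

theorem sat_globally_of_nonempty {L : Team AP} (hL : L.Nonempty) :
    φ.globally.sat L ↔ ∀ i, φ.sat (L.shift i) := by
  have hshift : ∀ k, L.shift k ≠ ∅ := fun k => (Set.image_nonempty.mpr hL).ne_empty
  simp only [globally, sat, hshift, and_false, exists_false, or_false]

theorem FlatWith.globally (hφ : φ.FlatWith P) :
    φ.globally.FlatWith fun w => ∀ i, P (w.shift i) := by
  intro L
  rcases L.eq_empty_or_nonempty with rfl | hL
  · simp [InqFormN.globally, sat, hφ _, Team.shift]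
  · simp only [sat_globally_of_nonempty hL, hφ _, Team.shift, Set.forall_mem_image]
    exact ⟨fun h w hw i => h i hw, fun h i w hw => h w hw i⟩

theorem flatWith_globally_atom (p : AP) :
    (globally (atom p)).FlatWith fun w => ∀ i, p ∈ w i :=
  (flatWith_atom p).globally.of_iff fun w => by simp [Trace.shift]

def atMostOnce (p : AP) : InqFormN AP :=
  globally (imp (atom p) (next (globally (neg (atom p)))))

theorem flatWith_atMostOnce (p : AP) :
    (atMostOnce p).FlatWith fun w => ∀ i j, p ∈ w i → p ∈ w j → i = j := by
  refine ((flatWith_atom p).imp (flatWith_atom p).neg.globally.next).globally.of_iff fun w => ?_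
  simp only [Trace.shift, add_zero]
  refine ⟨fun h i j hi hj => ?_, fun h i hi k hk => ?_⟩
  · by_contra hij
    rcases Nat.lt_or_gt_of_ne hij with hlt | hlt
    · obtain ⟨k, rfl⟩ := Nat.exists_eq_add_of_lt hlt
      exact h i hi k (by simpa [add_assoc, add_comm 1] using hj)
    · obtain ⟨k, rfl⟩ := Nat.exists_eq_add_of_lt hlt
      exact h j hj k (by simpa [add_assoc, add_comm 1] using hi)
  · have := h _ _ hi hk
    omega

theorem flatWith_neg_globally_neg_atom (p : AP) :
    (neg (globally (neg (atom p)))).FlatWith fun w => ∃ i, p ∈ w i :=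
  (flatWith_atom p).neg.globally.neg.of_iff fun w => by simp [Trace.shift]

theorem sat_globally_bneg_neg_atom (p : AP) (L : Team AP) :
    (globally (bneg (neg (atom p)))).sat L ↔ ∀ i, ∃ w ∈ L, p ∈ w i := by
  have hbneg : ∀ L' : Team AP, (bneg (neg (atom p))).sat L' ↔ ∃ w ∈ L', p ∈ w 0 := fun L' => by
    simp [sat, (flatWith_atom p).neg L']
  constructor
  · intro h
    have hL : L.Nonempty := by
      obtain ⟨_, ⟨w, hw, -⟩, -⟩ := (hbneg _).mp ((h 0).resolve_right (by simp))
      exact ⟨w, hw⟩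
    intro i
    obtain ⟨_, ⟨w, hw, rfl⟩, hp⟩ := (hbneg _).mp ((sat_globally_of_nonempty hL).mp h i)
    exact ⟨w, hw, by simpa [Trace.shift] using hp⟩
  · intro h
    obtain ⟨w, hw, -⟩ := h 0
    rw [sat_globally_of_nonempty ⟨w, hw⟩]
    intro i
    obtain ⟨v, hv, hp⟩ := h i
    exact (hbneg _).mpr ⟨v.shift i, ⟨v, hv, rfl⟩, by simpa [Trace.shift] using hp⟩

end InqFormN

open InqFormN

def nuTraceFormula : InqFormN AP2 :=
  .and (.and (globally (.atom .nu)) (atMostOnce .hash)) (neg (globally (neg (.atom .hash))))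

theorem flatWith_nuTraceFormula : nuTraceFormula.FlatWith IsNuTrace :=
  ((flatWith_globally_atom _).and (flatWith_atMostOnce _)).and
    (flatWith_neg_globally_neg_atom _) |>.of_iff fun _ =>
      ⟨fun ⟨⟨hnu, huniq⟩, hex⟩ => ⟨hnu, existsUnique_of_exists_of_unique hex huniq⟩,
        fun ⟨hnu, hhash⟩ => ⟨⟨hnu, fun _ _ => hhash.unique⟩, hhash.exists⟩⟩

theorem IsNuTrace.eq_of_hash_mem {v w : Trace AP2} (hv : IsNuTrace v) (hw : IsNuTrace w)
    {i : ℕ} (hvi : AP2.hash ∈ v i) (hwi : AP2.hash ∈ w i) : v = w := by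
  funext j
  ext a
  cases a with
  | nu => exact iff_of_true (hv.1 j) (hw.1 j)
  | hash =>
    exact ⟨fun h => hv.2.unique h hvi ▸ hwi, fun h => hw.2.unique h hwi ▸ hvi⟩

theorem exists_isNuTrace_hash_mem (i : ℕ) : ∃ w, IsNuTrace w ∧ AP2.hash ∈ w i := by
  refine ⟨fun j => if j = i then Set.univ else {.nu}, ⟨fun j => ?_, i, by simp, fun j hj => ?_⟩,
    by simp⟩
  · dsimp only
    split_ifs <;> simp
  · by_contra hji
    simp [hji] at hj

theorem eq_setOf_isNuTrace_iff (L : Team AP2) :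
    L = {w | IsNuTrace w} ↔ (∀ w ∈ L, IsNuTrace w) ∧ ∀ i, ∃ w ∈ L, AP2.hash ∈ w i := by
  constructor
  · rintro rfl
    exact ⟨fun _ hw => hw, exists_isNuTrace_hash_mem⟩
  · rintro ⟨hsub, hall⟩
    refine Set.Subset.antisymm hsub fun v hv => ?_
    obtain ⟨i, hvi, -⟩ := hv.2
    obtain ⟨w, hw, hwi⟩ := hall i
    exact (hsub w hw).eq_of_hash_mem hv hwi hvi ▸ hw

/-- there is an InqLTL(~) formula over `AP = {ν, #}` whose unique
model is the team of all ν-traces. -/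
theorem inqLTLN_unique_model_all_nu_traces :
    ∃ φ : InqFormN AP2,
      ∀ L : Team AP2, φ.sat L ↔ L = {w : Trace AP2 | IsNuTrace w} := by
  refine ⟨nuTraceFormula.and (globally (bneg (neg (.atom .hash)))), fun L => ?_⟩
  rw [eq_setOf_isNuTrace_iff, ← flatWith_nuTraceFormula L, ← sat_globally_bneg_neg_atom]
  rfl
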